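/- Let 0 < p < 1, let m be a positive integer, and let n_1, …, n_m be positive integers such that n_{j+1} ≥ 4(2m)^{1/(1−p)} n_j for 1 ≤ j ≤ m−1. Let D be the block-diagonal square matrix of size N = n_1 + ⋯ + n_m whose j-th diagonal block is n_j^{−(1−p)/p} I_{n_j} (all other entries zero). Then ‖D‖_{ℓ∞⊗_pℓ∞}^p ≥ m/2. -/

import Mathlib

open scoped BigOperators

/-- The sup norm of a vector/sequence of complex numbers. -/
noncomputable def supNorm {ι : Type*} (x : ι → ℂ) : ℝ := ⨆ i, ‖x i‖

/-- The set of values `(∑ₙ ‖xₙ‖_∞^p ‖yₙ‖_∞^p)^(1/p)` over all representations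
`M j k = ∑ₙ xₙ(j) yₙ(k)` of the matrix `M` as a sum of rank-one matrices with
bounded rows/columns.  `M` lies in `ℓ∞ ⊗_p ℓ∞` iff this set is nonempty, and
`‖M‖_{ℓ∞⊗_pℓ∞}` is its infimum. -/
noncomputable def tensorReprVals {ι : Type*} (p : ℝ) (M : ι → ι → ℂ) : Set ℝ :=
  {c | ∃ x y : ℕ → ι → ℂ,
    (∀ n, BddAbove (Set.range fun i => ‖x n i‖)) ∧
    (∀ n, BddAbove (Set.range fun i => ‖y n i‖)) ∧
    Summable (fun n => supNorm (x n) ^ p * supNorm (y n) ^ p) ∧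
    (∀ i j, HasSum (fun n => x n i * y n j) (M i j)) ∧
    c = (∑' n, supNorm (x n) ^ p * supNorm (y n) ^ p) ^ (1 / p)}

/-!
Write the block-diagonal matrix as `∑ₖ xₖ yₖᵀ` and put `aₖ = ‖xₖ‖_∞ ‖yₖ‖_∞`, `s = ∑ₖ aₖ ^ p`.
On a block `N ^ (-(1-p)/p) • I_N`, pairing the representation with the orthogonal projection
onto the complement of `span {ȳₖ | k ∈ H}` kills the terms in `H` and bounds every other term
by `N aₖ`, so `N ^ (-(1-p)/p) (N - |H|) ≤ N ∑_{k ∉ H} aₖ`. For the `j`-th block (`N = n_j`) let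
`H` consist of the terms with `aₖ > u = N ^ (-1/p)`, counted by Markov's inequality for `aₖ ^ p`,
and the terms above the threshold `t_i = (2m) ^ (-1/(1-p)) n_i ^ (-1/p)` of an earlier block `i`,
of which there are at most `s N / 8m` by the growth condition. Estimating the remaining terms by
`aₖ ≤ aₖ ^ p t_j ^ (1-p)` or `aₖ ≤ aₖ ^ p u ^ (1-p)` shows that the terms above `t_j` but below
all earlier thresholds carry `p`-mass at least `1 - 5s/8m`. These sets are disjoint for different
blocks, so `m - 5s/8 ≤ s`.
-/

open Matrix WithLp

theorem Matrix.hasSum_dotProduct_mulVec {β ι R : Type*} [Fintype ι] [CommSemiring R]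
    [TopologicalSpace R] [IsTopologicalSemiring R] {x y : β → ι → R} {M : Matrix ι ι R}
    (h : ∀ i j, HasSum (fun k => x k i * y k j) (M i j)) (P : Matrix ι ι R) :
    HasSum (fun k => y k ⬝ᵥ P *ᵥ x k) (P * M).trace := by
  have expand : ∀ k, y k ⬝ᵥ P *ᵥ x k = ∑ i, ∑ j, P i j * (x k j * y k i) := fun k => by
    simp only [dotProduct, mulVec, Finset.mul_sum]
    exact Finset.sum_congr rfl fun i _ => Finset.sum_congr rfl fun j _ => by ring
  simp only [expand, trace, diag, mul_apply]
  exact hasSum_sum fun i _ => hasSum_sum fun j _ => (h j i).mul_left _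

theorem Submodule.trace_starProjection {𝕜 E : Type*} [RCLike 𝕜] [NormedAddCommGroup E]
    [InnerProductSpace 𝕜 E] [FiniteDimensional 𝕜 E] (K : Submodule 𝕜 E) :
    LinearMap.trace 𝕜 E K.starProjection = Module.finrank 𝕜 K := by
  have hK : IsIdempotentElem (K.starProjection : E →ₗ[𝕜] E) :=
    ContinuousLinearMap.IsIdempotentElem.toLinearMap K.isIdempotentElem_starProjection
  rw [((LinearMap.isProj_range_iff_isIdempotentElem _).2 hK).trace]
  show ((Module.finrank 𝕜 K.starProjection.range : ℕ) : 𝕜) = _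
  rw [K.range_starProjection]

theorem exists_contraction_matrix_annihilating_of_finite {ι 𝕜 : Type*} [Fintype ι] [DecidableEq ι]
    [RCLike 𝕜] {V : Set (ι → 𝕜)} (hV : V.Finite) :
    ∃ P : Matrix ι ι 𝕜, ∃ r : ℕ, P.trace = r ∧ Fintype.card ι ≤ r + V.ncard ∧
      (∀ v ∈ V, ∀ x, v ⬝ᵥ P *ᵥ x = 0) ∧
      ∀ u x, ‖u ⬝ᵥ P *ᵥ x‖ ≤ ‖toLp 2 u‖ * ‖toLp 2 x‖ := by
  set b := (EuclideanSpace.basisFun ι 𝕜).toBasis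
  set W : Submodule 𝕜 (EuclideanSpace 𝕜 ι) := Submodule.span 𝕜 ((fun v => toLp 2 (star v)) '' V)
  set P := LinearMap.toMatrix b b Wᗮ.starProjection
  have hP : ∀ x, P *ᵥ x = ofLp (Wᗮ.starProjection (toLp 2 x)) := fun x => by
    change ofLp (Matrix.toEuclideanLin P (toLp 2 x)) = _
    rw [Matrix.toEuclideanLin_eq_toLin_orthonormal, Matrix.toLin_toMatrix]
    rfl
  have hdot : ∀ u x, u ⬝ᵥ P *ᵥ x = inner 𝕜 (toLp 2 (star u)) (Wᗮ.starProjection (toLp 2 x)) :=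
    fun u x => by
      rw [EuclideanSpace.inner_eq_star_dotProduct, hP]
      simp [dotProduct_comm]
  refine ⟨P, Module.finrank 𝕜 Wᗮ, ?_, ?_, ?_, ?_⟩
  · rw [← LinearMap.trace_eq_matrix_trace, Submodule.trace_starProjection]
  · have hW : Module.finrank 𝕜 W ≤ V.ncard := by
      have hfin := hV.image fun v => toLp 2 (star v)
      have h := finrank_span_finset_le_card (R := 𝕜) hfin.toFinset
      rw [Set.finrank, Set.Finite.coe_toFinset, ← Set.ncard_eq_toFinset_card _ hfin] at h
      exact h.trans (Set.ncard_image_le hV)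
    have := W.finrank_add_finrank_orthogonal
    rw [finrank_euclideanSpace] at this
    omega
  · intro v hv x
    rw [hdot]
    exact Submodule.inner_right_of_mem_orthogonal (K := W)
      (Submodule.subset_span ⟨v, hv, rfl⟩) (Wᗮ.starProjection_apply_mem _)
  · intro u x
    rw [hdot]
    refine (norm_inner_le_norm _ _).trans (mul_le_mul ?_ (Wᗮ.norm_starProjection_apply_le _)
      (norm_nonneg _) (norm_nonneg _))
    simp [EuclideanSpace.norm_eq]

theorem EuclideanSpace.norm_toLp_mul_norm_toLp_le {ι 𝕜 : Type*} [Fintype ι] [RCLike 𝕜]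
    {u v : ι → 𝕜} {c : ℝ} (h : ∀ i j, ‖u i‖ * ‖v j‖ ≤ c) :
    ‖toLp 2 u‖ * ‖toLp 2 v‖ ≤ Fintype.card ι * c := by
  rcases isEmpty_or_nonempty ι with hι | ⟨⟨i₀⟩⟩
  · simp [EuclideanSpace.norm_eq]
  have hc : 0 ≤ c := (mul_nonneg (norm_nonneg _) (norm_nonneg _)).trans (h i₀ i₀)
  rw [EuclideanSpace.norm_eq, EuclideanSpace.norm_eq, ← Real.sqrt_mul (by positivity),
    Real.sqrt_le_left (by positivity), Finset.sum_mul_sum]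
  calc ∑ i, ∑ j, ‖u i‖ ^ 2 * ‖v j‖ ^ 2 ≤ ∑ i : ι, ∑ j : ι, c ^ 2 := by
        gcongr with i _ j _
        rw [← mul_pow]
        exact pow_le_pow_left₀ (by positivity) (h i j) 2
    _ = (Fintype.card ι * c) ^ 2 := by simp; ring

theorem mul_card_sub_ncard_le_card_mul_tsum {ι 𝕜 : Type*} [Fintype ι] [DecidableEq ι] [RCLike 𝕜]
    {x y : ℕ → ι → 𝕜} {a : ℕ → ℝ} {d : ℝ} (hd : 0 ≤ d) (hxy : ∀ k i j, ‖x k i‖ * ‖y k j‖ ≤ a k)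
    (hrep : ∀ i j, HasSum (fun k => x k i * y k j) (if i = j then (d : 𝕜) else 0))
    {H : Set ℕ} (hH : H.Finite) (ha : Summable (Hᶜ.indicator a)) :
    d * (Fintype.card ι - H.ncard) ≤ Fintype.card ι * ∑' k, Hᶜ.indicator a k := by
  obtain ⟨P, r, htr, hr, hzero, hnorm⟩ :=
    exists_contraction_matrix_annihilating_of_finite (hH.image y)
  have hsum : HasSum (fun k => y k ⬝ᵥ P *ᵥ x k) (d * r : 𝕜) := by
    have h := Matrix.hasSum_dotProduct_mulVec (x := x) (y := y) (M := (d : 𝕜) • 1) (fun i j => by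
      simpa [Matrix.one_apply] using hrep i j) P
    rwa [Matrix.mul_smul, mul_one, Matrix.trace_smul, htr, smul_eq_mul] at h
  have hbound : ∀ k, ‖y k ⬝ᵥ P *ᵥ x k‖ ≤ Fintype.card ι * Hᶜ.indicator a k := fun k => by
    by_cases hk : k ∈ H
    · simp [hzero (y k) ⟨k, hk, rfl⟩, hk]
    · rw [Set.indicator_of_mem (show k ∈ Hᶜ from hk)]
      exact (hnorm _ _).trans
        (EuclideanSpace.norm_toLp_mul_norm_toLp_le fun i j => by rw [mul_comm]; exact hxy k j i)
  calc d * (Fintype.card ι - H.ncard) ≤ d * r := by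
        gcongr
        have := Set.ncard_image_le (f := y) hH
        push_cast [sub_le_iff_le_add]
        exact_mod_cast hr.trans (by omega)
    _ = ‖(d * r : 𝕜)‖ := by
        rw [norm_mul, RCLike.norm_ofReal, RCLike.norm_natCast, abs_of_nonneg hd]
    _ ≤ Fintype.card ι * ∑' k, Hᶜ.indicator a k :=
        hsum.norm_le_of_bounded (ha.hasSum.mul_left _) hbound

theorem Summable.finite_setOf_le {β : Type*} {f : β → ℝ} (hf : Summable f) {ε : ℝ} (hε : 0 < ε) :
    {k | ε ≤ f k}.Finite := by
  simpa using Filter.eventually_cofinite.1 (hf.tendsto_cofinite_zero.eventually (gt_mem_nhds hε))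

theorem ncard_mul_le_tsum_indicator {β : Type*} {f : β → ℝ} (hf : 0 ≤ f) {S : Set β} {ε : ℝ}
    (hε : ∀ k ∈ S, ε ≤ f k) : S.ncard * ε ≤ ∑' k, S.indicator f k := by
  rcases S.finite_or_infinite with hS | hS
  · rw [← hS.coe_toFinset, ← sum_eq_tsum_indicator, Set.ncard_coe_finset, ← nsmul_eq_mul,
      ← Finset.sum_const]
    exact Finset.sum_le_sum fun k hk => hε k (hS.mem_toFinset.1 hk)
  · rw [hS.ncard, Nat.cast_zero, zero_mul]
    exact tsum_nonneg (Set.indicator_nonneg fun k _ => hf k)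

theorem sum_tsum_indicator_le_tsum {ι β : Type*} (s : Finset ι) {t : ι → Set β}
    (ht : (s : Set ι).PairwiseDisjoint t) {f : β → ℝ} (hf0 : 0 ≤ f) (hf : Summable f) :
    ∑ i ∈ s, ∑' k, (t i).indicator f k ≤ ∑' k, f k := by
  rw [← Summable.tsum_finsetSum fun i _ => hf.indicator _]
  refine Summable.tsum_le_tsum (fun k => ?_) (summable_sum fun i _ => hf.indicator _) hf
  rw [← Finset.indicator_biUnion_apply s t ht]
  exact Set.indicator_le_self' (fun k _ => hf0 k) k

theorem Real.le_rpow_mul_rpow_one_sub {p v c : ℝ} (hp : p ≤ 1) (hv : 0 ≤ v) (hvc : v ≤ c) :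
    v ≤ v ^ p * c ^ (1 - p) :=
  calc v = v ^ p * v ^ (1 - p) := by
        rw [← Real.rpow_add' hv (by simp), add_sub_cancel, Real.rpow_one]
    _ ≤ v ^ p * c ^ (1 - p) := by gcongr

theorem tsum_indicator_le_rpow_interpolation {β : Type*} {p t u : ℝ} (hp1 : p ≤ 1) (ht : 0 ≤ t)
    {a : β → ℝ} (ha0 : ∀ k, 0 ≤ a k) (hA : Summable fun k => a k ^ p) {S : Set β}
    (hS : ∀ k ∈ S, a k ≤ u) :
    Summable (S.indicator a) ∧ ∑' k, S.indicator a k ≤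
      t ^ (1 - p) * ∑' k, a k ^ p +
        u ^ (1 - p) * ∑' k, (S ∩ {k | t < a k}).indicator (fun k => a k ^ p) k := by
  have hle : ∀ k, S.indicator a k ≤ t ^ (1 - p) * a k ^ p +
      u ^ (1 - p) * (S ∩ {k | t < a k}).indicator (fun k => a k ^ p) k := fun k => by
    have hlow : 0 ≤ t ^ (1 - p) * a k ^ p := by have := ha0 k; positivity
    by_cases hk : k ∈ S
    · have hu : 0 ≤ u := (ha0 k).trans (hS k hk)
      have hind : 0 ≤ (S ∩ {k | t < a k}).indicator (fun k => a k ^ p) k :=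
        Set.indicator_nonneg (fun k _ => Real.rpow_nonneg (ha0 k) p) k
      rw [Set.indicator_of_mem hk]
      rcases le_or_gt (a k) t with hkt | hkt
      · have := Real.le_rpow_mul_rpow_one_sub hp1 (ha0 k) hkt
        have : 0 ≤ u ^ (1 - p) * (S ∩ {k | t < a k}).indicator (fun k => a k ^ p) k := by
          positivity
        linarith
      · have hk' : k ∈ S ∩ {k | t < a k} := ⟨hk, hkt⟩
        rw [Set.indicator_of_mem hk']
        linarith [Real.le_rpow_mul_rpow_one_sub hp1 (ha0 k) (hS k hk)]
    · rw [Set.indicator_of_notMem hk, Set.indicator_of_notMem fun h => hk h.1, mul_zero]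
      linarith
  have hmaj := (hA.mul_left (t ^ (1 - p))).add ((hA.indicator (S ∩ {k | t < a k})).mul_left
    (u ^ (1 - p)))
  have hsum := Summable.of_nonneg_of_le (Set.indicator_nonneg fun k _ => ha0 k) hle hmaj
  refine ⟨hsum, (Summable.tsum_le_tsum hle hsum hmaj).trans_eq ?_⟩
  rw [Summable.tsum_add (hA.mul_left _) ((hA.indicator _).mul_left _), tsum_mul_left, tsum_mul_left]

theorem one_sub_le_tsum_indicator_of_hasSum {ι : Type*} [Fintype ι] [DecidableEq ι] [Nonempty ι]
    {p : ℝ} (hp0 : 0 < p) (hp1 : p < 1) {x y : ℕ → ι → ℂ} {a : ℕ → ℝ}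
    (hxy : ∀ k i j, ‖x k i‖ * ‖y k j‖ ≤ a k) (hA : Summable fun k => a k ^ p)
    (hrep : ∀ i j, HasSum (fun k => x k i * y k j)
      (if i = j then (((Fintype.card ι : ℝ) ^ (-((1 - p) / p)) : ℝ) : ℂ) else 0))
    {C : Set ℕ} (hC : C.Finite) {κ : ℝ} (hκ0 : 0 ≤ κ) (hκ1 : κ ≤ 1) :
    1 - C.ncard / Fintype.card ι - κ ^ (1 - p) * ∑' k, a k ^ p ≤
      ∑' k, {k | k ∉ C ∧ κ * (Fintype.card ι : ℝ) ^ (-(1 / p)) < a k}.indicator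
        (fun k => a k ^ p) k := by
  obtain ⟨i₀⟩ := ‹Nonempty ι›
  have ha0 : ∀ k, 0 ≤ a k := fun k => (by positivity : 0 ≤ ‖x k i₀‖ * ‖y k i₀‖).trans (hxy k i₀ i₀)
  set N : ℝ := (Fintype.card ι : ℝ)
  have hN : 0 < N := Nat.cast_pos.2 Fintype.card_pos
  set A : ℕ → ℝ := fun k => a k ^ p
  have hA0 : ∀ k, 0 ≤ A k := fun k => Real.rpow_nonneg (ha0 k) p
  set u := N ^ (-(1 / p))
  set t := κ * u
  have hu : 0 < u := by positivity
  have hup : N * u ^ p = 1 := by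
    rw [← Real.rpow_mul hN.le, neg_mul, one_div, inv_mul_cancel₀ hp0.ne', Real.rpow_neg_one,
      mul_inv_cancel₀ hN.ne']
  set I := {k | k ∉ C ∧ t < a k}
  set Big := {k | k ∉ C ∧ u < a k}
  have hBigI : Big ⊆ I := fun k hk => ⟨hk.1, (mul_le_of_le_one_left hu.le hκ1).trans_lt hk.2⟩
  have hBig_le : ∀ k ∈ Big, u ^ p ≤ A k := fun k hk => Real.rpow_le_rpow hu.le hk.2.le hp0.le
  have hBig : Big.Finite := (hA.finite_setOf_le (by positivity : 0 < u ^ p)).subset hBig_le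
  have hsmall : ∀ k ∈ (C ∪ Big)ᶜ, a k ≤ u := fun k hk => by
    by_contra! h
    exact hk (Or.inr ⟨fun hC => hk (Or.inl hC), h⟩)
  have hmid : (C ∪ Big)ᶜ ∩ {k | t < a k} = I \ Big := by
    ext k
    simp only [Set.mem_inter_iff, Set.mem_compl_iff, Set.mem_union, Set.mem_sdiff,
      Set.mem_ofPred_eq, I, Big]
    tauto
  obtain ⟨hsum_small, htsum⟩ :=
    tsum_indicator_le_rpow_interpolation (t := t) hp1.le (by positivity) ha0 hA hsmall
  rw [hmid, Set.indicator_sdiff hBigI] at htsum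
  simp only [Pi.sub_apply] at htsum
  rw [Summable.tsum_sub (hA.indicator _) (hA.indicator _)] at htsum
  have hpair := mul_card_sub_ncard_le_card_mul_tsum (d := u ^ (1 - p)) (by positivity) hxy
    (by rwa [← Real.rpow_mul hN.le, show -(1 / p) * (1 - p) = -((1 - p) / p) by ring])
    (hC.union hBig) hsum_small
  have hcard : ((C ∪ Big).ncard : ℝ) ≤ C.ncard + N * ∑' k, Big.indicator A k :=
    calc ((C ∪ Big).ncard : ℝ) ≤ C.ncard + Big.ncard := by exact_mod_cast Set.ncard_union_le _ _
      _ = C.ncard + N * (Big.ncard * u ^ p) := by rw [mul_left_comm, hup, mul_one]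
      _ ≤ C.ncard + N * ∑' k, Big.indicator A k := by
        gcongr; exact ncard_mul_le_tsum_indicator hA0 hBig_le
  have hH : N - (C ∪ Big).ncard ≤
      N * (κ ^ (1 - p) * ∑' k, A k + (∑' k, I.indicator A k - ∑' k, Big.indicator A k)) :=
    le_of_mul_le_mul_left ((hpair.trans (mul_le_mul_of_nonneg_left htsum hN.le)).trans_eq
      (by rw [Real.mul_rpow hκ0 hu.le]; ring)) (by positivity : 0 < u ^ (1 - p))
  have key : N - C.ncard ≤ N * (κ ^ (1 - p) * ∑' k, A k + ∑' k, I.indicator A k) := by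
    linear_combination hH + hcard
  have := (div_le_iff₀' hN).2 key
  rw [sub_div, div_self hN.ne'] at this
  linarith

theorem Fin.mul_le_of_lt_of_forall_succ {m : ℕ} {f : Fin m → ℝ} {Q : ℝ} (hQ : 1 ≤ Q)
    (hf : ∀ j, 0 ≤ f j) (h : ∀ j k : Fin m, (j : ℕ) + 1 = k → Q * f j ≤ f k) {i j : Fin m}
    (hij : i < j) : Q * f i ≤ f j := by
  have hmono : Monotone f := by
    cases m with
    | zero => exact fun i => i.elim0
    | succ m => exact Fin.monotone_iff_le_succ.2 fun l =>
        (le_mul_of_one_le_left (hf _) hQ).trans (h _ _ (by simp))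
  have hj : 1 ≤ (j : ℕ) := by have := Fin.lt_def.1 hij; omega
  obtain ⟨l, hl⟩ : ∃ l : Fin m, (l : ℕ) + 1 = j := ⟨⟨j - 1, by omega⟩, by simp; omega⟩
  calc Q * f i ≤ Q * f l := by
        gcongr
        exact hmono (Fin.le_def.2 (by have := Fin.lt_def.1 hij; omega))
    _ ≤ f j := h l j hl

noncomputable def blockThreshold (p : ℝ) (m N : ℕ) : ℝ :=
  (2 * m : ℝ) ^ (-(1 / (1 - p))) * (N : ℝ) ^ (-(1 / p))

theorem eight_mul_div_le_blockThreshold_rpow {p : ℝ} (hp0 : 0 < p) (hp1 : p < 1) {m N N' : ℕ}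
    (hm : 0 < m) (hN' : 0 < N') (h : 4 * (2 * m : ℝ) ^ (1 / (1 - p)) * N' ≤ N) :
    8 * m / N ≤ blockThreshold p m N' ^ p := by
  set κ := (2 * m : ℝ) ^ (-(1 / (1 - p)))
  set Q := 4 * (2 * m : ℝ) ^ (1 / (1 - p))
  have hκQ : κ ^ p * Q = 8 * m := by
    have hexp : -(1 / (1 - p)) * p + 1 / (1 - p) = 1 := by
      field_simp [(by linarith : 1 - p ≠ 0)]; ring
    calc κ ^ p * Q = 4 * ((2 * m : ℝ) ^ (-(1 / (1 - p)) * p) * (2 * m : ℝ) ^ (1 / (1 - p))) := by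
          rw [← Real.rpow_mul (by positivity)]; ring
      _ = 8 * m := by rw [← Real.rpow_add (by positivity), hexp, Real.rpow_one]; ring
  have hN'pos : (0 : ℝ) < N' := Nat.cast_pos.2 hN'
  calc 8 * m / N = κ ^ p * Q / N := by rw [hκQ]
    _ ≤ κ ^ p * Q / (Q * N') := by gcongr
    _ = κ ^ p / N' := by rw [mul_comm Q, mul_div_mul_right _ _ (by positivity)]
    _ = blockThreshold p m N' ^ p := by
      rw [blockThreshold, Real.mul_rpow (by positivity) (by positivity),
        ← Real.rpow_mul hN'pos.le, neg_mul, one_div_mul_cancel hp0.ne', Real.rpow_neg_one,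
        div_eq_mul_inv]

theorem one_sub_le_tsum_indicator_blockThreshold {p : ℝ} (hp0 : 0 < p) (hp1 : p < 1) {m : ℕ}
    {n : Fin m → ℕ} (hn : ∀ j, 0 < n j)
    (hgrow : ∀ j k : Fin m, (j : ℕ) + 1 = (k : ℕ) →
      4 * ((2 * m : ℝ) ^ ((1 : ℝ) / (1 - p))) * n j ≤ n k)
    {x y : ℕ → (j : Fin m) × Fin (n j) → ℂ} {a : ℕ → ℝ} (ha0 : ∀ k, 0 ≤ a k)
    (hxy : ∀ k i i', ‖x k i‖ * ‖y k i'‖ ≤ a k) (hA : Summable fun k => a k ^ p)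
    (hrep : ∀ i i', HasSum (fun k => x k i * y k i')
      (if i = i' then ((((n i.1 : ℝ) ^ (-((1 - p) / p)) : ℝ) : ℂ)) else 0)) (j : Fin m) :
    1 - 5 * (∑' k, a k ^ p) / (8 * m) ≤ ∑' k,
      {k | (∀ j' < j, a k ≤ blockThreshold p m (n j')) ∧ blockThreshold p m (n j) < a k}.indicator
        (fun k => a k ^ p) k := by
  set s := ∑' k, a k ^ p
  have hA0 : ∀ k, 0 ≤ a k ^ p := fun k => Real.rpow_nonneg (ha0 k) p
  have hm : (0 : ℝ) < m := Nat.cast_pos.2 j.pos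
  have h2m : (1 : ℝ) ≤ 2 * m := by
    have : (1 : ℝ) ≤ m := by exact_mod_cast j.pos
    linarith
  have h1p : 0 < 1 - p := by linarith
  have hnj : (0 : ℝ) < n j := Nat.cast_pos.2 (hn j)
  set κ := (2 * m : ℝ) ^ (-(1 / (1 - p)))
  have hκ1 : κ ≤ 1 := Real.rpow_le_one_of_one_le_of_nonpos h2m (by rw [neg_nonpos]; positivity)
  have hκ1p : κ ^ (1 - p) = 1 / (2 * m) := by
    rw [← Real.rpow_mul (by positivity), neg_mul, one_div_mul_cancel h1p.ne', Real.rpow_neg_one,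
      one_div]
  set C := {k | ∃ j' < j, blockThreshold p m (n j') < a k}
  have hC_le : ∀ k ∈ C, 8 * m / n j ≤ a k ^ p := by
    rintro k ⟨j', hj', hk⟩
    have hchain := Fin.mul_le_of_lt_of_forall_succ (f := fun j => (n j : ℝ))
      (by linarith [Real.one_le_rpow h2m (by positivity : (0 : ℝ) ≤ 1 / (1 - p))])
      (fun j => Nat.cast_nonneg _) hgrow hj'
    exact (eight_mul_div_le_blockThreshold_rpow hp0 hp1 j.pos (hn j') hchain).trans
      (Real.rpow_le_rpow (by unfold blockThreshold; positivity) hk.le hp0.le)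
  have hCcard : (C.ncard : ℝ) / n j ≤ s / (8 * m) :=
    calc (C.ncard : ℝ) / n j = C.ncard * (8 * m / n j) / (8 * m) := by field_simp
      _ ≤ s / (8 * m) := by
        gcongr
        exact (ncard_mul_le_tsum_indicator hA0 hC_le).trans (Summable.tsum_le_tsum
          (Set.indicator_le_self' fun k _ => hA0 k) (hA.indicator _) hA)
  have : Nonempty (Fin (n j)) := ⟨⟨0, hn j⟩⟩
  have hblk := one_sub_le_tsum_indicator_of_hasSum hp0 hp1 (x := fun k i => x k ⟨j, i⟩)
    (y := fun k i => y k ⟨j, i⟩) (fun k i i' => hxy k _ _) hA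
    (fun i i' => by simpa [Fintype.card_fin] using hrep ⟨j, i⟩ ⟨j, i'⟩)
    ((hA.finite_setOf_le (by positivity)).subset hC_le) (by positivity) hκ1
  simp only [Fintype.card_fin, hκ1p, one_div_mul_eq_div] at hblk
  have hset : {k | k ∉ C ∧ κ * (n j : ℝ) ^ (-(1 / p)) < a k} =
      {k | (∀ j' < j, a k ≤ blockThreshold p m (n j')) ∧ blockThreshold p m (n j) < a k} := by
    ext k
    simp [C, blockThreshold, κ]
  rw [hset] at hblk
  have : 5 * s / (8 * m) = s / (8 * m) + s / (2 * m) := by field_simp; ring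
  linarith

theorem half_le_tsum_of_hasSum_blockDiagonal {p : ℝ} (hp0 : 0 < p) (hp1 : p < 1) {m : ℕ}
    {n : Fin m → ℕ} (hn : ∀ j, 0 < n j)
    (hgrow : ∀ j k : Fin m, (j : ℕ) + 1 = (k : ℕ) →
      4 * ((2 * m : ℝ) ^ ((1 : ℝ) / (1 - p))) * n j ≤ n k)
    {x y : ℕ → (j : Fin m) × Fin (n j) → ℂ} {a : ℕ → ℝ} (ha0 : ∀ k, 0 ≤ a k)
    (hxy : ∀ k i i', ‖x k i‖ * ‖y k i'‖ ≤ a k) (hA : Summable fun k => a k ^ p)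
    (hrep : ∀ i i', HasSum (fun k => x k i * y k i')
      (if i = i' then ((((n i.1 : ℝ) ^ (-((1 - p) / p)) : ℝ) : ℂ)) else 0)) :
    (m : ℝ) / 2 ≤ ∑' k, a k ^ p := by
  set s := ∑' k, a k ^ p
  have hA0 : ∀ k, 0 ≤ a k ^ p := fun k => Real.rpow_nonneg (ha0 k) p
  rcases Nat.eq_zero_or_pos m with rfl | hm
  · simpa using tsum_nonneg hA0
  set I : Fin m → Set ℕ := fun j =>
    {k | (∀ j' < j, a k ≤ blockThreshold p m (n j')) ∧ blockThreshold p m (n j) < a k}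
  have hdisj : ((Finset.univ : Finset (Fin m)) : Set (Fin m)).PairwiseDisjoint I := by
    intro j _ j' _ hne
    refine Set.disjoint_left.2 fun k ⟨hk, hkt⟩ ⟨hk', hkt'⟩ => ?_
    rcases lt_or_gt_of_ne hne with h | h
    · exact (hk' j h).not_gt hkt
    · exact (hk j' h).not_gt hkt'
  have hsum := (Finset.sum_le_sum fun j _ => one_sub_le_tsum_indicator_blockThreshold hp0 hp1 hn
    hgrow ha0 hxy hA hrep j).trans (sum_tsum_indicator_le_tsum Finset.univ hdisj hA0 hA)
  rw [Finset.sum_const, Finset.card_univ, Fintype.card_fin, nsmul_eq_mul] at hsum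
  have : (m : ℝ) * (1 - 5 * s / (8 * m)) = m - 5 * s / 8 := by field_simp
  linarith

theorem supNorm_nonneg {ι : Type*} (x : ι → ℂ) : 0 ≤ supNorm x :=
  Real.iSup_nonneg fun _ => norm_nonneg _

theorem norm_le_supNorm {ι : Type*} {x : ι → ℂ} (hx : BddAbove (Set.range fun i => ‖x i‖)) (i : ι) :
    ‖x i‖ ≤ supNorm x :=
  le_ciSup hx i

theorem tensorReprVals_nonempty {ι : Type*} [Fintype ι] {p : ℝ} (hp : p ≠ 0) (M : ι → ι → ℂ) :
    (tensorReprVals p M).Nonempty := by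
  classical
  set e : ι → ℕ := fun j => Fintype.equivFin ι j
  have he : Function.Injective e := Fin.val_injective.comp (Fintype.equivFin ι).injective
  set x : ℕ → ι → ℂ := fun k i => Function.extend e (fun j => M i j) 0 k
  set y : ℕ → ι → ℂ := fun k i' => Function.extend e (fun j => if j = i' then 1 else 0) 0 k
  have hx : ∀ k ∉ Set.range e, x k = 0 := fun k hk =>
    funext fun i => Function.extend_apply' _ _ _ (by simpa using hk)
  refine ⟨_, x, y, fun k => (Set.finite_range _).bddAbove, fun k => (Set.finite_range _).bddAbove,
    ?_, fun i i' => ?_, rfl⟩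
  · refine (he.summable_iff fun k hk => ?_).1 (Summable.of_finite)
    simp [hx k hk, supNorm, Real.zero_rpow hp]
  · refine (he.hasSum_iff fun k hk => by simp [hx k hk]).1 ?_
    convert hasSum_fintype ((fun k => x k i * y k i') ∘ e) using 1
    simp [x, y, he.extend_apply]

theorem stmt6_general (p : ℝ) (hp0 : 0 < p) (hp1 : p < 1) (m : ℕ)
    (n : Fin m → ℕ) (hn : ∀ j, 0 < n j)
    (hgrow : ∀ j k : Fin m, (j : ℕ) + 1 = (k : ℕ) →
      4 * ((2 * m : ℝ) ^ ((1 : ℝ) / (1 - p))) * n j ≤ n k) :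
    (m : ℝ) / 2 ≤
      sInf (tensorReprVals p fun x y : (j : Fin m) × Fin (n j) =>
        if x = y then ((((n x.1 : ℝ) ^ (-((1 - p) / p)) : ℝ) : ℂ)) else 0) ^ p := by
  calc (m : ℝ) / 2 = (((m : ℝ) / 2) ^ (1 / p)) ^ p := by
        rw [← Real.rpow_mul (by positivity), one_div_mul_cancel hp0.ne', Real.rpow_one]
    _ ≤ _ := by
      gcongr
      refine le_csInf (tensorReprVals_nonempty hp0.ne' _) ?_
      rintro c ⟨x, y, hbx, hby, hsum, hrep, rfl⟩
      simp only [← Real.mul_rpow (supNorm_nonneg _) (supNorm_nonneg _)] at hsum ⊢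
      gcongr
      exact half_le_tsum_of_hasSum_blockDiagonal hp0 hp1 hn hgrow
        (fun k => mul_nonneg (supNorm_nonneg _) (supNorm_nonneg _))
        (fun k i i' => mul_le_mul (norm_le_supNorm (hbx k) i) (norm_le_supNorm (hby k) i')
          (norm_nonneg _) (supNorm_nonneg _)) hsum hrep

/-- Lemma 5.2: if `0 < p < 1` and `n_{j+1} ≥ 4 (2m)^{1/(1-p)} n_j`, then the
block-diagonal matrix with `j`-th diagonal block `n_j^{-(1-p)/p} I_{n_j}` has
`‖·‖_{ℓ∞⊗_pℓ∞}^p ≥ m/2`. -/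
theorem stmt6 (p : ℝ) (hp0 : 0 < p) (hp1 : p < 1) (m : ℕ) (hm : 0 < m)
    (n : Fin m → ℕ) (hn : ∀ j, 0 < n j)
    (hgrow : ∀ j k : Fin m, (j : ℕ) + 1 = (k : ℕ) →
      4 * ((2 * m : ℝ) ^ ((1 : ℝ) / (1 - p))) * n j ≤ n k) :
    (m : ℝ) / 2 ≤
      sInf (tensorReprVals p fun x y : (j : Fin m) × Fin (n j) =>
        if x = y then ((((n x.1 : ℝ) ^ (-((1 - p) / p)) : ℝ) : ℂ)) else 0) ^ p :=
  stmt6_general p hp0 hp1 m n hn hgrow
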